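/- Let G be a graph with maximum vertex degree at most Δ, and let T₁, T₂ be disjoint vertex subsets with |T₁|, |T₂| ≥ κ such that T₁ ∪ T₂ is α-well-linked in G for some 0 < α < 1, and each of T₁, T₂ is node-well-linked in G. Then for any subsets T₁' ⊆ T₁, T₂' ⊆ T₂ with |T₁'| = |T₂'| ≤ ακ/(2Δ), the pair (T₁', T₂') is node-linked in G: there exist |T₁'| vertex-disjoint paths connecting T₁' to T₂'. -/

import Mathlib

/-!
By Menger's theorem it suffices to show that every set `S` separating `T₁'` from `T₂'` has at
least `k = |T₁'|` vertices; suppose `|S| < k`. Node-well-linkedness of `T₁` forbids a union of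
components of `G - S` which, like its complement, contains more than `|S|` vertices of `T₁ \ S`:
the two parts would be joined by more than `|S|` disjoint paths, all through `S`. Adding
components one at a time, this forces a single component to contain all but `|S|` vertices of
`T₁ \ S` (as `|T₁ \ S| > 3|S|`), and likewise for `T₂`. The same argument shows that `T₁'` and
`T₂'` meet these heavy components, which therefore differ. So `S` separates sets `X ⊆ T₁`,
`Y ⊆ T₂` of size at least `κ - 2|S|`. The flow between them given by `α`-well-linkedness crosses
the at most `Δ|S|` edges at `S`, each carrying at most `1/α`, whence `α(κ - 2|S|) ≤ Δ|S|`,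
contradicting `2Δk ≤ ακ` once `Δ ≥ 2`; and `Δ ≤ 1` is impossible, because three vertices of a
well-linked set are pairwise connected.

Menger's theorem is proved by induction on the number of edges: either contracting an edge `xy`
keeps all separators large, or there is a minimum separator containing `x` and `y`, and the
two path systems into it in `G - xy` glue together.
-/


attribute [local instance] Classical.propDecidable

noncomputable section

variable {V : Type}

/-- The degree of a vertex `v` in the simple graph `G`. -/
def deg [Fintype V] (G : SimpleGraph V) (v : V) : ℕ :=
  (Finset.univ.filter (fun u => G.Adj v u)).card

/-- The boundary `Γ(C)` of a cluster `C`: the vertices of `C` having a neighbor outside `C`. -/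
def bdry (G : SimpleGraph V) (C : Finset V) : Finset V :=
  C.filter (fun v => ∃ u, u ∉ C ∧ G.Adj v u)

/-- The number of edges `|E(A,B)|` with one endpoint in `A` and the other in `B`
(for disjoint `A`, `B`). -/
def cutCard (G : SimpleGraph V) (A B : Finset V) : ℕ :=
  ((A ×ˢ B).filter (fun ab => G.Adj ab.1 ab.2)).card

/-- A flow in `G[C]` from `A` to `B`, in which every vertex of `A` sends exactly one
unit of flow, every vertex of `B` receives exactly one unit of flow, and the total
flow through any edge is at most `η`. -/
def HasUnitFlowIn (G : SimpleGraph V) (C A B : Finset V) (η : ℝ) : Prop :=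
  ∃ (P : Finset (Σ u v : V, G.Walk u v)) (f : (Σ u v : V, G.Walk u v) → ℝ),
    (∀ p ∈ P, 0 ≤ f p) ∧
    (∀ p ∈ P, p.1 ∈ A ∧ p.2.1 ∈ B) ∧
    (∀ p ∈ P, ∀ x ∈ p.2.2.support, x ∈ C) ∧
    (∀ a ∈ A, ∑ p ∈ P.filter (fun p => p.1 = a), f p = 1) ∧
    (∀ b ∈ B, ∑ p ∈ P.filter (fun p => p.2.1 = b), f p = 1) ∧
    (∀ e : Sym2 V, ∑ p ∈ P.filter (fun p => e ∈ p.2.2.edges), f p ≤ η)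

/-- `T` is `α`-well-linked in `G[C]`: every pair of disjoint equal-sized subsets of `T`
can be connected, one-to-one, by a flow of edge-congestion at most `1/α` inside `C`. -/
def WellLinkedIn (G : SimpleGraph V) (C T : Finset V) (α : ℝ) : Prop :=
  ∀ T' T'' : Finset V, T' ⊆ T → T'' ⊆ T → Disjoint T' T'' → T'.card = T''.card →
    HasUnitFlowIn G C T' T'' (1 / α)

/-- `T` is `(k',α)`-well-linked in `G[C]`. -/
def WellLinkedKIn (G : SimpleGraph V) (C T : Finset V) (k' : ℕ) (α : ℝ) : Prop :=
  ∀ T' T'' : Finset V, T' ⊆ T → T'' ⊆ T → Disjoint T' T'' → T'.card = T''.card →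
    T'.card ≤ k' → HasUnitFlowIn G C T' T'' (1 / α)

/-- `T` is `α`-well-linked in `G`. -/
def WellLinked [Fintype V] (G : SimpleGraph V) (T : Finset V) (α : ℝ) : Prop :=
  WellLinkedIn G Finset.univ T α

/-- There is a family of pairwise vertex-disjoint paths in `G`, one starting at each
vertex of `A`, each ending at a (necessarily distinct) vertex of `B`. -/
def NodeLinkedSets (G : SimpleGraph V) (A B : Finset V) : Prop :=
  ∃ P : Finset (Σ u v : V, G.Walk u v),
    (∀ p ∈ P, p.2.2.IsPath ∧ p.1 ∈ A ∧ p.2.1 ∈ B) ∧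
    (∀ a ∈ A, ∃ p ∈ P, p.1 = a) ∧
    (∀ p ∈ P, ∀ q ∈ P, p ≠ q → ∀ x ∈ p.2.2.support, x ∉ q.2.2.support)

/-- `T` is node-well-linked in `G`. -/
def NodeWellLinked (G : SimpleGraph V) (T : Finset V) : Prop :=
  ∀ T' T'' : Finset V, T' ⊆ T → T'' ⊆ T → Disjoint T' T'' → T'.card = T''.card →
    NodeLinkedSets G T' T''

/-- `(T₁, T₂)` are node-linked in `G`. -/
def NodeLinked (G : SimpleGraph V) (T₁ T₂ : Finset V) : Prop :=
  ∀ T' T'' : Finset V, T' ⊆ T₁ → T'' ⊆ T₂ → T'.card = T''.card → NodeLinkedSets G T' T''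

/-- `(A,B)` is a `ρ`-balanced cut of the cluster `C` with respect to the vertex set `Γ`. -/
def IsBalancedCut (Γ A B C : Finset V) (ρ : ℝ) : Prop :=
  A ∪ B = C ∧ Disjoint A B ∧
    ρ * (Γ.card : ℝ) ≤ ((A ∩ Γ).card : ℝ) ∧ ρ * (Γ.card : ℝ) ≤ ((B ∩ Γ).card : ℝ)

namespace Finset

lemma exists_card_filter_mem_between {α β : Type*} (s : Finset α) (f : α → β) {m : ℕ}
    (hfib : ∀ b, (s.filter fun a => f a = b).card ≤ m) (hs : m < s.card) :
    ∃ I : Finset β, m < (s.filter fun a => f a ∈ I).card ∧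
      (s.filter fun a => f a ∈ I).card ≤ 2 * m := by
  suffices h : ∀ I : Finset β, m < (s.filter fun a => f a ∈ I).card →
      ∃ J : Finset β, m < (s.filter fun a => f a ∈ J).card ∧
        (s.filter fun a => f a ∈ J).card ≤ 2 * m from
    h (s.image f) (by rwa [filter_true_of_mem fun a ha => mem_image_of_mem f ha])
  intro I
  induction I using Finset.induction_on with
  | empty => simp
  | insert b I _ ih =>
    intro hI
    by_cases hm : m < (s.filter fun a => f a ∈ I).card
    · exact ih hm
    refine ⟨insert b I, hI, ?_⟩
    simp only [mem_insert, filter_or]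
    have := card_union_le (s.filter fun a => f a = b) (s.filter fun a => f a ∈ I)
    have := hfib b
    omega

end Finset

namespace SimpleGraph

open Finset

section Menger

variable {G H : SimpleGraph V} {A B S T W : Finset V} {a b c t u v w x y z : V} {k : ℕ}

def Separates (G : SimpleGraph V) (A B S : Finset V) : Prop :=
  ∀ a ∈ A, ∀ b ∈ B, ∀ p : G.Walk a b, ∃ z ∈ p.support, z ∈ S

def HasDisjointPaths (G : SimpleGraph V) (A B : Finset V) (k : ℕ) : Prop :=
  ∃ P : Finset (Σ u v : V, G.Walk u v), P.card = k ∧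
    (∀ p ∈ P, p.2.2.IsPath ∧ p.1 ∈ A ∧ p.2.1 ∈ B) ∧
    (∀ p ∈ P, ∀ q ∈ P, p ≠ q → ∀ z ∈ p.2.2.support, z ∉ q.2.2.support)

lemma Walk.exists_prefix_first_mem (p : G.Walk u v) (h : ∃ z ∈ p.support, z ∈ S) :
    ∃ c ∈ S, ∃ q : G.Walk u c,
      q.support.Sublist p.support ∧ ∀ z ∈ q.support, z ∈ S → z = c := by
  induction p with
  | nil =>
    obtain ⟨z, hz, hzS⟩ := h
    rw [support_nil, List.mem_singleton] at hz
    subst hz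
    exact ⟨z, hzS, nil, List.Sublist.refl _, by simp⟩
  | @cons a b c hadj p ih =>
    by_cases ha : a ∈ S
    · exact ⟨a, ha, nil, by simp, by simp⟩
    obtain ⟨d, hdS, q, hsub, honly⟩ : ∃ d ∈ S, ∃ q : G.Walk b d,
        q.support.Sublist p.support ∧ ∀ z ∈ q.support, z ∈ S → z = d := by
      refine ih ?_
      obtain ⟨z, hz, hzS⟩ := h
      rw [support_cons, List.mem_cons] at hz
      rcases hz with rfl | hz
      exacts [absurd hzS ha, ⟨z, hz, hzS⟩]
    refine ⟨d, hdS, cons hadj q, by simpa using hsub, fun z hz hzS => ?_⟩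
    rw [support_cons, List.mem_cons] at hz
    rcases hz with rfl | hz
    exacts [absurd hzS ha, honly z hz hzS]

lemma Walk.IsPath.append_of_support_inter {p : G.Walk u v} {q : G.Walk v w} (hp : p.IsPath)
    (hq : q.IsPath) (h : ∀ z ∈ p.support, z ∈ q.support → z = v) : (p.append q).IsPath := by
  rw [isPath_def, support_append]
  have hq' := (isPath_def _).1 hq
  rw [← cons_tail_support] at hq'
  refine ((isPath_def _).1 hp).append (List.nodup_cons.1 hq').2 fun z hzp hzq => ?_
  obtain rfl := h z hzp (List.mem_of_mem_tail hzq)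
  exact (List.nodup_cons.1 hq').1 hzq

lemma Walk.IsPath.notMem_of_mem_support_takeUntil {R : G.Walk c t} (hR : R.IsPath)
    (honly : ∀ w ∈ R.support, w ∈ T → w = t) (hz : z ∈ R.support) (hzT : z ∉ T)
    (hw : w ∈ (R.takeUntil z hz).support) : w ∉ T := by
  intro hwT
  obtain rfl := honly w (R.support_takeUntil_subset_support hz hw) hwT
  exact R.endpoint_notMem_support_takeUntil hR hz (ne_of_mem_of_not_mem hwT hzT) hw

lemma Separates.symm (h : G.Separates A B S) : G.Separates B A S := by
  intro b hb a ha p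
  obtain ⟨z, hz, hzS⟩ := h a ha b hb p.reverse
  exact ⟨z, by simpa using hz, hzS⟩

lemma Separates.anti (hle : H ≤ G) (h : G.Separates A B S) : H.Separates A B S := by
  intro a ha b hb p
  obtain ⟨z, hz, hzS⟩ := h a ha b hb (p.mapLe hle)
  exact ⟨z, by rwa [Walk.support_mapLe_eq_support] at hz, hzS⟩

lemma Separates.subset {A' B' : Finset V} (h : G.Separates A B S) (hA : A' ⊆ A) (hB : B' ⊆ B) :
    G.Separates A' B' S :=
  fun a ha b hb => h a (hA ha) b (hB hb)

lemma injOn_of_mem_support {P : Finset (Σ u v : V, G.Walk u v)}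
    (hdisj : ∀ p ∈ P, ∀ q ∈ P, p ≠ q → ∀ z ∈ p.2.2.support, z ∉ q.2.2.support)
    {f : (Σ u v : V, G.Walk u v) → V} (hf : ∀ p ∈ P, f p ∈ p.2.2.support) :
    Set.InjOn f P := by
  intro p hp q hq hpq
  by_contra hne
  exact hdisj p hp q hq hne _ (hf p hp) (hpq ▸ hf q hq)

lemma hasDisjointPaths_of_family {ι : Type} (s : Finset ι) (F : ι → Σ u v : V, G.Walk u v)
    (hpath : ∀ i ∈ s, (F i).2.2.IsPath ∧ (F i).1 ∈ A ∧ (F i).2.1 ∈ B)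
    (hdisj : ∀ i ∈ s, ∀ j ∈ s, i ≠ j →
      ∀ z ∈ (F i).2.2.support, z ∉ (F j).2.2.support) :
    G.HasDisjointPaths A B s.card := by
  have hinj : Set.InjOn F s := by
    intro i hi j hj hij
    by_contra hne
    exact hdisj i hi j hj hne _ (F i).2.2.start_mem_support (hij ▸ (F j).2.2.start_mem_support)
  refine ⟨s.image F, card_image_of_injOn hinj, ?_, ?_⟩
  · simpa using hpath
  · simp only [mem_image]
    rintro _ ⟨i, hi, rfl⟩ _ ⟨j, hj, rfl⟩ hne
    exact hdisj i hi j hj (fun h => hne (h ▸ rfl))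

lemma HasDisjointPaths.mono (hle : H ≤ G) (h : H.HasDisjointPaths A B k) :
    G.HasDisjointPaths A B k := by
  obtain ⟨P, rfl, hpath, hdisj⟩ := h
  exact hasDisjointPaths_of_family P (fun p => ⟨p.1, p.2.1, p.2.2.mapLe hle⟩)
    (fun p hp => ⟨(hpath p hp).1.mapLe hle, (hpath p hp).2⟩)
    (fun p hp q hq hne z => by simpa using hdisj p hp q hq hne z)

lemma hasDisjointPaths_of_edgeSet_eq_empty (hE : G.edgeSet = ∅)
    (h : ∀ S, G.Separates A B S → k ≤ S.card) : G.HasDisjointPaths A B k := by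
  have hsep : G.Separates A B (A ∩ B) := by
    intro a ha b hb p
    cases p with
    | nil => exact ⟨a, by simp, mem_inter.2 ⟨ha, hb⟩⟩
    | cons hadj _ => exact absurd (hE ▸ G.mem_edgeSet.2 hadj) (Set.notMem_empty _)
  obtain ⟨K, hK, rfl⟩ := exists_subset_card_eq (h _ hsep)
  refine hasDisjointPaths_of_family K (fun a => ⟨a, a, Walk.nil⟩)
    (fun a ha => ⟨.nil, (mem_inter.1 (hK ha)).1, (mem_inter.1 (hK ha)).2⟩) ?_
  simp

def merge (x y : V) (z : V) : V := if z = y then x else z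

@[simp] lemma merge_self : merge x y y = x := if_pos rfl

lemma merge_of_ne (h : z ≠ y) : merge x y z = z := if_neg h

/-- The contraction `G / xy`, realized on `V` itself: `y` becomes an isolated vertex. -/
def contractEdge (G : SimpleGraph V) (x y : V) : SimpleGraph V where
  Adj a b := a ≠ b ∧ ∃ a' b', G.Adj a' b' ∧ merge x y a' = a ∧ merge x y b' = b
  symm := ⟨fun _ _ ⟨hne, a', b', h, ha, hb⟩ => ⟨hne.symm, b', a', h.symm, hb, ha⟩⟩
  loopless := ⟨fun _ h => h.1 rfl⟩

lemma contractEdge_adj : (G.contractEdge x y).Adj a b ↔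
    a ≠ b ∧ ∃ a' b', G.Adj a' b' ∧ merge x y a' = a ∧ merge x y b' = b := Iff.rfl

lemma exists_walk_of_merge_eq (hxy : G.Adj x y) (h : merge x y a = merge x y b) :
    ∃ q : G.Walk a b, ∀ z ∈ q.support, merge x y z = merge x y a := by
  by_cases hab : a = b
  · subst hab
    exact ⟨Walk.nil, by simp⟩
  have hadj : G.Adj a b := by
    unfold merge at h
    split_ifs at h with ha hb hb
    · exact absurd (ha.trans hb.symm) hab
    · subst ha h; exact hxy.symm
    · subst hb h; exact hxy
    · exact absurd h hab
  refine ⟨Walk.cons hadj Walk.nil, fun z hz => ?_⟩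
  simp only [Walk.support_cons, Walk.support_nil, List.mem_cons, List.not_mem_nil,
    or_false] at hz
  rcases hz with rfl | rfl
  exacts [rfl, h.symm]

lemma exists_contractEdge_walk (p : G.Walk a b) :
    ∃ q : (G.contractEdge x y).Walk (merge x y a) (merge x y b),
      ∀ z ∈ q.support, ∃ z' ∈ p.support, merge x y z' = z := by
  induction p with
  | nil => exact ⟨Walk.nil, by simp⟩
  | @cons a c b h p ih =>
    obtain ⟨q, hq⟩ := ih
    have hq' : ∀ z ∈ q.support, ∃ z' ∈ (Walk.cons h p).support, merge x y z' = z := by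
      intro z hz
      obtain ⟨z', hz', rfl⟩ := hq z hz
      exact ⟨z', by simp [hz'], rfl⟩
    by_cases hm : merge x y a = merge x y c
    · exact ⟨q.copy hm.symm rfl, by simpa using hq'⟩
    refine ⟨Walk.cons (contractEdge_adj.2 ⟨hm, a, c, h, rfl, rfl⟩) q, fun z hz => ?_⟩
    rw [Walk.support_cons, List.mem_cons] at hz
    rcases hz with rfl | hz
    exacts [⟨a, by simp, rfl⟩, hq' z hz]

lemma exists_walk_of_contractEdge_walk (hxy : G.Adj x y) (p : (G.contractEdge x y).Walk a b)
    {a' b' : V} (ha : merge x y a' = a) (hb : merge x y b' = b) :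
    ∃ q : G.Walk a' b', ∀ z ∈ q.support, merge x y z ∈ p.support := by
  induction p generalizing a' with
  | nil =>
    obtain ⟨q, hq⟩ := exists_walk_of_merge_eq hxy (ha.trans hb.symm)
    exact ⟨q, fun z hz => by simp [hq z hz, ha]⟩
  | @cons a c b h p ih =>
    obtain ⟨-, a₀, c₀, h₀, ha₀, hc₀⟩ := contractEdge_adj.1 h
    obtain ⟨q, hq⟩ := ih hc₀ hb
    obtain ⟨r, hr⟩ := exists_walk_of_merge_eq hxy (ha.trans ha₀.symm)
    refine ⟨r.append (Walk.cons h₀ q), fun z hz => ?_⟩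
    simp only [Walk.mem_support_append_iff, Walk.support_cons, List.mem_cons] at hz
    rcases hz with hz | rfl | hz
    · simp [hr z hz, ha]
    · simp [ha₀]
    · exact List.mem_cons_of_mem _ (hq z hz)

lemma ncard_edgeSet_contractEdge_lt [Finite V] (hxy : G.Adj x y) :
    (G.contractEdge x y).edgeSet.ncard < G.edgeSet.ncard := by
  have hsub : (G.contractEdge x y).edgeSet ⊆
      Sym2.map (merge x y) '' (G.edgeSet \ {s(x, y)}) := by
    intro e he
    induction e using Sym2.ind with
    | _ a b =>
    obtain ⟨hne, a', b', h, rfl, rfl⟩ := contractEdge_adj.1 he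
    refine ⟨s(a', b'), ⟨h, fun heq => hne ?_⟩, rfl⟩
    rw [Set.mem_singleton_iff, Sym2.eq_iff] at heq
    rcases heq with ⟨rfl, rfl⟩ | ⟨rfl, rfl⟩ <;> simp [merge_of_ne hxy.ne]
  calc (G.contractEdge x y).edgeSet.ncard
      ≤ (Sym2.map (merge x y) '' (G.edgeSet \ {s(x, y)})).ncard :=
        Set.ncard_le_ncard hsub (Set.toFinite _)
    _ ≤ (G.edgeSet \ {s(x, y)}).ncard := Set.ncard_image_le (Set.toFinite _)
    _ < G.edgeSet.ncard := Set.ncard_sdiff_singleton_lt_of_mem hxy (Set.toFinite _)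

lemma Separates.of_contractEdge
    (h : (G.contractEdge x y).Separates (A.image (merge x y)) (B.image (merge x y)) T) :
    G.Separates A B (if x ∈ T then insert y T else T) := by
  intro a ha b hb p
  obtain ⟨q, hq⟩ := exists_contractEdge_walk (x := x) (y := y) p
  obtain ⟨_, hz, hzT⟩ := h _ (mem_image_of_mem _ ha) _ (mem_image_of_mem _ hb) q
  obtain ⟨z, hz', rfl⟩ := hq _ hz
  refine ⟨z, hz', ?_⟩
  by_cases hzy : z = y
  · subst hzy
    rw [merge_self] at hzT
    simp [hzT]
  · rw [merge_of_ne hzy] at hzT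
    split_ifs <;> simp [hzT]

lemma HasDisjointPaths.of_contractEdge (hxy : G.Adj x y)
    (h : (G.contractEdge x y).HasDisjointPaths (A.image (merge x y)) (B.image (merge x y)) k) :
    G.HasDisjointPaths A B k := by
  obtain ⟨P, rfl, hpath, hdisj⟩ := h
  have hlift : ∀ p : P, ∃ a ∈ A, ∃ b ∈ B, ∃ q : G.Walk a b,
      q.IsPath ∧ ∀ z ∈ q.support, merge x y z ∈ p.1.2.2.support := by
    intro p
    obtain ⟨-, hA, hB⟩ := hpath p p.2
    obtain ⟨a, haA, ha⟩ := mem_image.1 hA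
    obtain ⟨b, hbB, hb⟩ := mem_image.1 hB
    obtain ⟨q, hq⟩ := exists_walk_of_contractEdge_walk hxy p.1.2.2 ha hb
    exact ⟨a, haA, b, hbB, q.bypass, q.bypass_isPath,
      fun z hz => hq z (q.support_bypass_subset_support hz)⟩
  choose a ha b hb q hq using hlift
  rw [← card_attach]
  refine hasDisjointPaths_of_family P.attach (fun p => ⟨a p, b p, q p⟩)
    (fun p _ => ⟨(hq p).1, ha p, hb p⟩) fun p _ p' _ hne z hz hz' => ?_
  exact hdisj p p.2 p' p'.2 (Subtype.coe_ne_coe.2 hne) _ ((hq p).2 z hz) ((hq p').2 z hz')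

lemma Separates.of_deleteEdges (hT : G.Separates A B T) (hx : x ∈ T) (hy : y ∈ T)
    (hW : (G.deleteEdges {s(x, y)}).Separates A T W) : G.Separates A B W := by
  intro a ha b hb p
  obtain ⟨c, hcT, q, hsub, honly⟩ := p.exists_prefix_first_mem (hT a ha b hb p)
  -- `q` meets `T` only in its end, so it cannot use the edge `xy` between two vertices of `T`
  have hq : ∀ e ∈ q.edges, e ∉ ({s(x, y)} : Set (Sym2 V)) := by
    rintro e he rfl
    exact (q.edges_subset_edgeSet he).ne ((honly x (q.fst_mem_support_of_mem_edges he) hx).trans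
      (honly y (q.snd_mem_support_of_mem_edges he) hy).symm)
  obtain ⟨w, hw, hwW⟩ := hW a ha c hcT (q.toDeleteEdges _ hq)
  exact ⟨w, hsub.subset (by simpa using hw), hwW⟩

def IsLinkageOnto (G : SimpleGraph V) (A T : Finset V) (s : T → V)
    (P : ∀ t : T, G.Walk (s t) t) : Prop :=
  ∀ t : T, s t ∈ A ∧ (P t).IsPath ∧ (∀ z ∈ (P t).support, z ∈ T → z = t) ∧
    ∀ t' : T, t' ≠ t → ∀ z ∈ (P t).support, z ∉ (P t').support

lemma HasDisjointPaths.exists_isLinkageOnto (h : G.HasDisjointPaths A T T.card) :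
    ∃ (s : T → V) (P : ∀ t : T, G.Walk (s t) t), G.IsLinkageOnto A T s P := by
  obtain ⟨P, hcard, hpath, hdisj⟩ := h
  have htrim : ∀ p : P, ∃ c ∈ T, ∃ q : G.Walk p.1.1 c, q.IsPath ∧
      q.support ⊆ p.1.2.2.support ∧ ∀ z ∈ q.support, z ∈ T → z = c := by
    intro p
    obtain ⟨hp, -, hT⟩ := hpath p p.2
    obtain ⟨c, hc, q, hsub, honly⟩ :=
      p.1.2.2.exists_prefix_first_mem ⟨_, p.1.2.2.end_mem_support, hT⟩
    exact ⟨c, hc, q, (Walk.isPath_def _).2 (hp.support_nodup.sublist hsub), hsub.subset, honly⟩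
  choose c hcT q hq using htrim
  have hdisj' : ∀ p p' : P, p ≠ p' → ∀ z ∈ (q p).support, z ∉ (q p').support :=
    fun p p' hne z hz hz' => hdisj p p.2 p' p'.2 (Subtype.coe_ne_coe.2 hne) z
      ((hq p).2.1 hz) ((hq p').2.1 hz')
  have hsurj : Set.SurjOn c P.attach T := by
    refine surjOn_of_injOn_of_card_le c (fun p _ => hcT p) (fun p _ p' _ hpp' => ?_)
      (by simp [hcard])
    by_contra hne
    exact hdisj' p p' hne _ (q p).end_mem_support (by rw [hpp']; exact (q p').end_mem_support)
  choose f hf using fun t : T => (hsurj t.2).imp fun _ h => h.2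
  refine ⟨fun t => (f t).1.1, fun t => (q (f t)).copy rfl (hf t), fun t =>
    ⟨(hpath _ (f t).2).2.1, by simpa using (hq (f t)).1, fun z hz hzT => ?_,
      fun t' hne z hz hz' => ?_⟩⟩
  · rw [Walk.support_copy] at hz
    exact (hf t) ▸ (hq (f t)).2.2 z hz hzT
  · rw [Walk.support_copy] at hz hz'
    exact hdisj' (f t) (f t') (fun h => hne (Subtype.ext (by rw [← hf t, ← hf t', h]))) z hz hz'

section Glue

variable {s s' : T → V} {P : ∀ t : T, G.Walk (s t) t} {Q : ∀ t : T, G.Walk (s' t) t}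

lemma IsLinkageOnto.eq_of_mem_support (hT : G.Separates A B T) (hP : G.IsLinkageOnto A T s P)
    (hQ : G.IsLinkageOnto B T s' Q) {t t' : T} (hz : z ∈ (P t).support)
    (hz' : z ∈ (Q t').support) : z = t ∧ z = t' := by
  suffices hzT : z ∈ T from ⟨(hP t).2.2.1 z hz hzT, (hQ t').2.2.1 z hz' hzT⟩
  -- otherwise the initial segments of `P t` and `Q t'` up to `z` form an `A`-`B` walk avoiding `T`
  by_contra hzT
  obtain ⟨w, hw, hwT⟩ := hT _ (hP t).1 _ (hQ t').1
    (((P t).takeUntil z hz).append ((Q t').takeUntil z hz').reverse)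
  rw [Walk.mem_support_append_iff, Walk.support_reverse, List.mem_reverse] at hw
  rcases hw with hw | hw
  · exact (hP t).2.1.notMem_of_mem_support_takeUntil (hP t).2.2.1 hz hzT hw hwT
  · exact (hQ t').2.1.notMem_of_mem_support_takeUntil (hQ t').2.2.1 hz' hzT hw hwT

lemma hasDisjointPaths_of_isLinkageOnto (hT : G.Separates A B T)
    (hP : G.IsLinkageOnto A T s P) (hQ : G.IsLinkageOnto B T s' Q) :
    G.HasDisjointPaths A B T.card := by
  have cross : ∀ {t t' : T} {z}, z ∈ (P t).support → z ∈ (Q t').support → z = t ∧ z = t' :=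
    fun hz hz' => IsLinkageOnto.eq_of_mem_support hT hP hQ hz hz'
  rw [← card_attach]
  refine hasDisjointPaths_of_family T.attach
    (fun t => ⟨s t, s' t, (P t).append (Q t).reverse⟩)
    (fun t _ => ⟨?_, (hP t).1, (hQ t).1⟩) fun t _ t' _ hne z hz hz' => ?_
  · exact (hP t).2.1.append_of_support_inter (hQ t).2.1.reverse
      fun z hz hz' => (cross hz (by simpa using hz')).1
  simp only [Walk.mem_support_append_iff, Walk.support_reverse, List.mem_reverse] at hz hz'
  rcases hz with hz | hz <;> rcases hz' with hz' | hz'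
  · exact (hP t).2.2.2 t' hne.symm z hz hz'
  · exact hne (Subtype.ext ((cross hz hz').1.symm.trans (cross hz hz').2))
  · exact hne (Subtype.ext ((cross hz' hz).2.symm.trans (cross hz' hz).1))
  · exact (hQ t).2.2.2 t' hne.symm z hz hz'

end Glue

lemma hasDisjointPaths_of_separator_deleteEdges (hT : G.Separates A B T) (hx : x ∈ T)
    (hy : y ∈ T) (hmin : ∀ S, G.Separates A B S → T.card ≤ S.card)
    (ih : ∀ A' B', (∀ S, (G.deleteEdges {s(x, y)}).Separates A' B' S → T.card ≤ S.card) →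
      (G.deleteEdges {s(x, y)}).HasDisjointPaths A' B' T.card) :
    G.HasDisjointPaths A B T.card := by
  have hle := G.deleteEdges_le {s(x, y)}
  obtain ⟨s, P, hP⟩ :=
    (ih A T fun W hW => hmin W (hT.of_deleteEdges hx hy hW)).exists_isLinkageOnto
  obtain ⟨s', Q, hQ⟩ :=
    (ih B T fun W hW => hmin W (hT.symm.of_deleteEdges hx hy hW).symm).exists_isLinkageOnto
  exact (hasDisjointPaths_of_isLinkageOnto (hT.anti hle) hP hQ).mono hle

theorem menger [Finite V] (h : ∀ S, G.Separates A B S → k ≤ S.card) :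
    G.HasDisjointPaths A B k := by
  induction hn : G.edgeSet.ncard using Nat.strong_induction_on generalizing G A B with
  | _ n ih =>
  subst hn
  rcases G.edgeSet.eq_empty_or_nonempty with hE | ⟨e, he⟩
  · exact hasDisjointPaths_of_edgeSet_eq_empty hE h
  induction e using Sym2.ind with | _ x y => ?_
  by_cases hC : ∀ T, (G.contractEdge x y).Separates (A.image (merge x y)) (B.image (merge x y))
      T → k ≤ T.card
  · exact (ih _ (ncard_edgeSet_contractEdge_lt he) hC rfl).of_contractEdge he
  push Not at hC
  obtain ⟨T, hT, hTk⟩ := hC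
  -- `T` must contain the merged vertex `x`, and then `insert y T` is a minimum separator of `G`
  have hx : x ∈ T := by
    by_contra hx
    have := h _ hT.of_contractEdge
    rw [if_neg hx] at this
    omega
  have hsep := hT.of_contractEdge
  rw [if_pos hx] at hsep
  obtain rfl : (insert y T).card = k := le_antisymm ((card_insert_le _ _).trans hTk) (h _ hsep)
  refine hasDisjointPaths_of_separator_deleteEdges hsep (mem_insert_of_mem hx)
    (mem_insert_self _ _) h fun A' B' h' => ih _ ?_ h' rfl
  rw [edgeSet_deleteEdges]
  exact Set.ncard_sdiff_singleton_lt_of_mem he (Set.toFinite _)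

end Menger

section Components

variable {G : SimpleGraph V} {A B S : Finset V} {u v z : V}

/-- `G - S`, realized on `V` itself: the vertices of `S` become isolated. -/
def isolateVerts (G : SimpleGraph V) (S : Finset V) : SimpleGraph V where
  Adj u v := G.Adj u v ∧ u ∉ S ∧ v ∉ S
  symm := ⟨fun _ _ ⟨h, hu, hv⟩ => ⟨h.symm, hv, hu⟩⟩
  loopless := ⟨fun a h => G.loopless.irrefl a h.1⟩

lemma isolateVerts_le : G.isolateVerts S ≤ G := fun _ _ h => h.1

lemma Walk.notMem_of_isolateVerts (p : (G.isolateVerts S).Walk u v) (hu : u ∉ S)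
    (hz : z ∈ p.support) : z ∉ S := by
  induction p with
  | nil => simpa [List.mem_singleton.1 (by simpa using hz)] using hu
  | cons h p ih =>
    rw [Walk.support_cons, List.mem_cons] at hz
    rcases hz with rfl | hz
    exacts [hu, ih h.2.2 hz]

lemma reachable_isolateVerts_of_walk (p : G.Walk u v) (hp : ∀ z ∈ p.support, z ∉ S) :
    (G.isolateVerts S).Reachable u v := by
  refine ⟨p.transfer _ fun e he => ?_⟩
  induction e using Sym2.ind with
  | _ a b =>
  exact ⟨p.edges_subset_edgeSet he, hp a (p.fst_mem_support_of_mem_edges he),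
    hp b (p.snd_mem_support_of_mem_edges he)⟩

lemma separates_iff :
    G.Separates A B S ↔ ∀ a ∈ A, ∀ b ∈ B, a ∉ S → ¬ (G.isolateVerts S).Reachable a b := by
  constructor
  · rintro h a ha b hb haS ⟨p⟩
    obtain ⟨z, hz, hzS⟩ := h a ha b hb (p.mapLe isolateVerts_le)
    rw [Walk.support_mapLe_eq_support] at hz
    exact p.notMem_of_isolateVerts haS hz hzS
  · intro h a ha b hb p
    by_cases haS : a ∈ S
    · exact ⟨a, p.start_mem_support, haS⟩
    by_contra! hp
    exact h a ha b hb haS (reachable_isolateVerts_of_walk p hp)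

end Components

section Degree

variable [Fintype V] {G : SimpleGraph V} {A B S : Finset V} {a b : V} {Δ : ℕ}

lemma deg_eq_degree (v : V) : deg G v = G.degree v := by
  rw [deg, degree, neighborFinset_eq_filter]

lemma card_biUnion_incidenceFinset_le (hΔ : ∀ v, deg G v ≤ Δ) (S : Finset V) :
    (S.biUnion fun v => G.incidenceFinset v).card ≤ S.card * Δ := by
  refine card_biUnion_le.trans ?_
  rw [← smul_eq_mul, ← sum_const]
  exact sum_le_sum fun v _ =>
    (card_incidenceFinset_eq_degree G v).trans_le (deg_eq_degree v ▸ hΔ v)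

lemma Separates.exists_mem_incidenceFinset (hsep : G.Separates A B S) (hB : Disjoint B S) :
    ∀ a ∈ A, ∀ b ∈ B, ∀ p : G.Walk a b,
      ∃ e ∈ p.edges, e ∈ S.biUnion fun v => G.incidenceFinset v := by
  intro a ha b hb p
  obtain ⟨z, hz, hzS⟩ := hsep a ha b hb p
  obtain rfl | ⟨e, he, hze⟩ := Walk.mem_support_iff_exists_mem_edges.1 hz
  · exact absurd hzS (Finset.disjoint_left.1 hB hb)
  refine ⟨e, he, mem_biUnion.2 ⟨z, hzS, ?_⟩⟩
  exact (mem_incidenceFinset _ _ _).2 ⟨p.edges_subset_edgeSet he, hze⟩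

lemma adj_of_reachable_of_deg_le_one (h1 : ∀ v, deg G v ≤ 1) (h : G.Reachable a b)
    (hab : a ≠ b) : G.Adj a b := by
  obtain ⟨p, hp⟩ := h.exists_isPath
  cases p with
  | nil => exact absurd rfl hab
  | @cons _ v _ h q =>
    cases q with
    | nil => exact h
    | @cons _ w _ h' q =>
      rw [Walk.cons_isPath_iff, Walk.support_cons] at hp
      have hne : a ≠ w := by
        rintro rfl
        exact hp.2 (List.mem_cons_of_mem _ q.start_mem_support)
      refine absurd (h1 v) (not_le.2 (one_lt_card.2 ⟨a, ?_, w, ?_, hne⟩)) <;>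
        simp [h.symm, h']

end Degree

end SimpleGraph

open SimpleGraph Finset

variable {G : SimpleGraph V} {A B S T T' X Y : Finset V} {a b : V} {m : ℕ}

lemma nodeLinkedSets_of_hasDisjointPaths (h : G.HasDisjointPaths A B A.card) :
    NodeLinkedSets G A B := by
  obtain ⟨P, hcard, hpath, hdisj⟩ := h
  refine ⟨P, hpath, fun a ha => ?_, hdisj⟩
  obtain ⟨p, hp, rfl⟩ := surjOn_of_injOn_of_card_le (fun p => p.1)
    (fun p hp => (hpath p hp).2.1)
    (injOn_of_mem_support hdisj fun p _ => p.2.2.start_mem_support) hcard.ge ha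
  exact ⟨p, hp, rfl⟩

lemma NodeLinkedSets.card_le_of_separates (h : NodeLinkedSets G A B)
    (hsep : G.Separates A B S) : A.card ≤ S.card := by
  obtain ⟨P, hpath, hstart, hdisj⟩ := h
  have hz : ∀ a : A, ∃ p ∈ P, p.1 = a ∧ ∃ z ∈ p.2.2.support, z ∈ S := by
    rintro ⟨a, ha⟩
    obtain ⟨p, hp, rfl⟩ := hstart a ha
    exact ⟨p, hp, rfl, hsep _ ha _ (hpath p hp).2.2 p.2.2⟩
  choose p hp hpa z hz hzS using hz
  rw [← card_attach]
  refine card_le_card_of_injOn z (fun a _ => hzS a) fun a _ a' _ haa' => ?_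
  by_contra hne
  refine hdisj _ (hp a) _ (hp a') (fun h => hne (Subtype.ext ?_)) _ (hz a) (haa' ▸ hz a')
  rw [← hpa a, ← hpa a', h]

lemma NodeWellLinked.le_card_of_separates (hn : NodeWellLinked G T) (hX : X ⊆ T) (hY : Y ⊆ T)
    (hXY : Disjoint X Y) (hmX : m ≤ X.card) (hmY : m ≤ Y.card) (hsep : G.Separates X Y S) :
    m ≤ S.card := by
  obtain ⟨X', hX', rfl⟩ := exists_subset_card_eq hmX
  obtain ⟨Y', hY', hY'card⟩ := exists_subset_card_eq hmY
  exact (hn X' Y' (hX'.trans hX) (hY'.trans hY) (hXY.mono hX' hY')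
    hY'card.symm).card_le_of_separates (hsep.subset hX' hY')

lemma NodeWellLinked.min_card_filter_le (hn : NodeWellLinked G T)
    (q : (G.isolateVerts S).ConnectedComponent → Prop) [DecidablePred q] :
    min ((T \ S).filter fun v => q ((G.isolateVerts S).connectedComponentMk v)).card
      ((T \ S).filter fun v => ¬ q ((G.isolateVerts S).connectedComponentMk v)).card
      ≤ S.card := by
  refine hn.le_card_of_separates ((filter_subset _ _).trans sdiff_subset)
    ((filter_subset _ _).trans sdiff_subset) (disjoint_filter_filter_not _ _ _) (min_le_left _ _)
    (min_le_right _ _) (separates_iff.2 fun a ha b hb _ hab => (mem_filter.1 hb).2 ?_)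
  rw [← ConnectedComponent.eq.2 hab]
  exact (mem_filter.1 ha).2

lemma NodeWellLinked.exists_heavy_component (hn : NodeWellLinked G T)
    (h : 3 * S.card < (T \ S).card) : ∃ c, T.card ≤
      ((T \ S).filter fun v => (G.isolateVerts S).connectedComponentMk v = c).card +
        2 * S.card := by
  by_contra! hlight
  have hT := card_le_card_sdiff_add_card (s := T) (t := S)
  have hsplit (q : (G.isolateVerts S).ConnectedComponent → Prop) [DecidablePred q] :
      ((T \ S).filter fun v => q ((G.isolateVerts S).connectedComponentMk v)).card +
        ((T \ S).filter fun v => ¬ q ((G.isolateVerts S).connectedComponentMk v)).card =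
        (T \ S).card :=
    card_filter_add_card_filter_not _
  have hfib (c) :
      ((T \ S).filter fun v => (G.isolateVerts S).connectedComponentMk v = c).card
        ≤ S.card := by
    have := hn.min_card_filter_le (· = c)
    have := hsplit (· = c)
    have := hlight c
    omega
  obtain ⟨I, hI, hI'⟩ := exists_card_filter_mem_between (T \ S) _ hfib (by omega)
  have := hn.min_card_filter_le (· ∈ I)
  have := hsplit (· ∈ I)
  omega

lemma NodeWellLinked.exists_mem_of_heavy (hn : NodeWellLinked G T) (hT' : T' ⊆ T)
    (hS : S.card < T'.card) {c : (G.isolateVerts S).ConnectedComponent}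
    (hc : T'.card ≤
      ((T \ S).filter fun v => (G.isolateVerts S).connectedComponentMk v = c).card) :
    ∃ t ∈ T', t ∉ S ∧ (G.isolateVerts S).connectedComponentMk t = c := by
  by_contra! h
  refine hS.not_ge (hn.le_card_of_separates hT' ((filter_subset _ _).trans sdiff_subset) ?_
    le_rfl hc (separates_iff.2 fun a ha b hb haS hab => ?_))
  · refine disjoint_right.2 fun b hb hbT' => ?_
    obtain ⟨hbTS, hbc⟩ := mem_filter.1 hb
    exact h b hbT' (mem_sdiff.1 hbTS).2 hbc
  · exact h a ha haS ((ConnectedComponent.eq.2 hab).trans (mem_filter.1 hb).2)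

lemma exists_separated_subsets {T₁ T₂ T₁' T₂' : Finset V} {κ : ℕ}
    (hn₁ : NodeWellLinked G T₁) (hn₂ : NodeWellLinked G T₂)
    (hs₁ : T₁' ⊆ T₁) (hs₂ : T₂' ⊆ T₂) (hcard : T₁'.card = T₂'.card)
    (hS : G.Separates T₁' T₂' S) (hSk : S.card < T₁'.card)
    (h₁ : κ ≤ T₁.card) (h₂ : κ ≤ T₂.card) (hκ : 4 * T₁'.card ≤ κ) :
    ∃ X ⊆ T₁ \ S, ∃ Y ⊆ T₂ \ S,
      X.card = Y.card ∧ κ ≤ X.card + 2 * S.card ∧ G.Separates X Y S := by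
  have := le_card_sdiff S T₁
  have := le_card_sdiff S T₂
  obtain ⟨c₁, hc₁⟩ := hn₁.exists_heavy_component (S := S) (by omega)
  obtain ⟨c₂, hc₂⟩ := hn₂.exists_heavy_component (S := S) (by omega)
  set C₁ := (T₁ \ S).filter fun v => (G.isolateVerts S).connectedComponentMk v = c₁
  set C₂ := (T₂ \ S).filter fun v => (G.isolateVerts S).connectedComponentMk v = c₂
  obtain ⟨t₁, ht₁, ht₁S, rfl⟩ :=
    hn₁.exists_mem_of_heavy hs₁ hSk (c := c₁) (show _ ≤ C₁.card by omega)
  obtain ⟨t₂, ht₂, -, rfl⟩ :=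
    hn₂.exists_mem_of_heavy hs₂ (hcard ▸ hSk) (c := c₂) (show _ ≤ C₂.card by omega)
  obtain ⟨X, hX, hXcard⟩ := exists_subset_card_eq (min_le_left C₁.card C₂.card)
  obtain ⟨Y, hY, hYcard⟩ := exists_subset_card_eq (min_le_right C₁.card C₂.card)
  refine ⟨X, hX.trans (filter_subset _ _), Y, hY.trans (filter_subset _ _),
    hXcard.trans hYcard.symm, by omega, separates_iff.2 fun a ha b hb _ hab => ?_⟩
  refine separates_iff.1 hS t₁ ht₁ t₂ ht₂ ht₁S (ConnectedComponent.exact ?_)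
  rw [← (mem_filter.1 (hX ha)).2, ← (mem_filter.1 (hY hb)).2]
  exact ConnectedComponent.eq.2 hab

section Flow

variable {C : Finset V} {η : ℝ}

lemma HasUnitFlowIn.reachable (h : HasUnitFlowIn G C {a} {b} η) : G.Reachable a b := by
  obtain ⟨P, f, -, hends, -, hsrc, -, -⟩ := h
  obtain ⟨p, hp⟩ : (P.filter fun p => p.1 = a).Nonempty := by
    by_contra! hP
    simpa [hP] using hsrc a (mem_singleton_self a)
  rw [mem_filter] at hp
  exact ⟨p.2.2.copy hp.2 (mem_singleton.1 (hends p hp.1).2)⟩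

lemma HasUnitFlowIn.card_le (h : HasUnitFlowIn G C A B η) (E : Finset (Sym2 V))
    (hE : ∀ a ∈ A, ∀ b ∈ B, ∀ p : G.Walk a b, ∃ e ∈ p.edges, e ∈ E) :
    (A.card : ℝ) ≤ E.card * η := by
  obtain ⟨P, f, hf0, hends, -, hsrc, -, hcong⟩ := h
  have hcross (p) (hp : p ∈ P) : f p ≤ ∑ e ∈ E with e ∈ p.2.2.edges, f p := by
    obtain ⟨e, he, heE⟩ := hE _ (hends p hp).1 _ (hends p hp).2 p.2.2
    rw [sum_const, nsmul_eq_mul]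
    exact le_mul_of_one_le_left (hf0 p hp)
      (by exact_mod_cast card_pos.2 ⟨e, mem_filter.2 ⟨heE, he⟩⟩)
  calc (A.card : ℝ) = ∑ a ∈ A, ∑ p ∈ P with p.1 = a, f p := by simp [sum_congr rfl hsrc]
    _ = ∑ p ∈ P, f p := sum_fiberwise_of_maps_to (fun p hp => (hends p hp).1) f
    _ ≤ ∑ p ∈ P, ∑ e ∈ E with e ∈ p.2.2.edges, f p := sum_le_sum hcross
    _ = ∑ e ∈ E, ∑ p ∈ P with e ∈ p.2.2.edges, f p := by
      simp_rw [sum_filter]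
      exact sum_comm
    _ ≤ ∑ _e ∈ E, η := sum_le_sum fun e _ => hcong e
    _ = E.card * η := by simp

lemma two_le_of_wellLinked [Fintype V] {Δ : ℕ} (hΔ : ∀ v, deg G v ≤ Δ) {α : ℝ}
    (hwl : WellLinked G T α) (hT : 2 < T.card) : 2 ≤ Δ := by
  by_contra! hΔ1
  have h1 (v : V) : deg G v ≤ 1 := by have := hΔ v; omega
  obtain ⟨a, ha, b, hb, c, hc, hab, hac, hbc⟩ := two_lt_card.1 hT
  have hadj {x : V} (hx : x ∈ T) (hax : a ≠ x) : G.Adj a x :=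
    adj_of_reachable_of_deg_le_one h1 (hwl {a} {x} (singleton_subset_iff.2 ha)
      (singleton_subset_iff.2 hx) (disjoint_singleton.2 hax) rfl).reachable hax
  refine absurd (h1 a) (not_le.2 (one_lt_card.2 ⟨b, ?_, c, ?_, hbc⟩)) <;>
    simp [hadj hb hab, hadj hc hac]

end Flow

lemma pos_and_le_of_le_div {k κ Δ : ℕ} {α : ℝ} (hk : 0 < k)
    (h : (k : ℝ) ≤ α * κ / (2 * Δ)) : 0 < Δ ∧ 2 * Δ * k ≤ α * κ := by
  have hΔ : 0 < Δ := by
    rw [Nat.pos_iff_ne_zero]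
    rintro rfl
    simp only [CharP.cast_eq_zero, mul_zero, div_zero, Nat.cast_nonpos] at h
    omega
  refine ⟨hΔ, ?_⟩
  rwa [le_div_iff₀ (by positivity), mul_comm] at h

/-- Node-linkedness of small subsets from node-well-linkedness. -/
theorem stmt7 [Fintype V] (G : SimpleGraph V)
    (Δ : ℕ) (hΔ : ∀ v, deg G v ≤ Δ)
    (T₁ T₂ : Finset V) (hdisj : Disjoint T₁ T₂) (κ : ℕ)
    (h1 : κ ≤ T₁.card) (h2 : κ ≤ T₂.card)
    (α : ℝ) (hα0 : 0 < α) (hα1 : α < 1)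
    (hwl : WellLinked G (T₁ ∪ T₂) α)
    (hn1 : NodeWellLinked G T₁) (hn2 : NodeWellLinked G T₂)
    (T₁' T₂' : Finset V) (hs1 : T₁' ⊆ T₁) (hs2 : T₂' ⊆ T₂)
    (hcards : T₁'.card = T₂'.card)
    (hsize : (T₁'.card : ℝ) ≤ α * (κ : ℝ) / (2 * Δ)) :
    NodeLinkedSets G T₁' T₂' := by
  refine nodeLinkedSets_of_hasDisjointPaths (menger fun S hS => ?_)
  by_contra! hSk
  obtain ⟨hΔ0, hΔk⟩ := pos_and_le_of_le_div (by omega) hsize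
  have hκ : 2 * Δ * T₁'.card < κ := by
    have : (1 : ℝ) ≤ Δ * T₁'.card := by exact_mod_cast Nat.mul_pos hΔ0 (by omega)
    exact_mod_cast (show (2 * Δ * T₁'.card : ℝ) < κ by nlinarith)
  have hΔ2 : 2 ≤ Δ := two_le_of_wellLinked hΔ hwl
    (by have := card_le_card (subset_union_left (s₂ := T₂) (s₁ := T₁)); nlinarith)
  obtain ⟨X, hX, Y, hY, hXY, hκX, hsep⟩ :=
    exists_separated_subsets hn1 hn2 hs1 hs2 hcards hS hSk h1 h2 (by nlinarith)
  have hflow := (hwl X Y (hX.trans (sdiff_subset.trans subset_union_left))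
    (hY.trans (sdiff_subset.trans subset_union_right))
    (hdisj.mono (hX.trans sdiff_subset) (hY.trans sdiff_subset)) hXY).card_le _
    (hsep.exists_mem_incidenceFinset (sdiff_disjoint.mono_left hY))
  have hE : ((S.biUnion fun v => G.incidenceFinset v).card : ℝ) ≤ S.card * Δ := by
    exact_mod_cast card_biUnion_incidenceFinset_le hΔ S
  rw [mul_one_div, le_div_iff₀ hα0] at hflow
  have hκX' : (κ : ℝ) ≤ X.card + 2 * S.card := by exact_mod_cast hκX
  have hSk' : (S.card : ℝ) + 1 ≤ T₁'.card := by exact_mod_cast hSk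
  have hΔ2' : (2 : ℝ) ≤ Δ := by exact_mod_cast hΔ2
  nlinarith
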